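/- arXiv:1706.04938 — 3 statements merged into one kernel-verified Lean document; each statement's English description precedes it below -/
import Mathlib

section
/- Let ε be a nonzero real number and let A, B : ℝ → ℝ be infinitely differentiable functions satisfying the rescaled Airy equation ε²·f''(x) = x·f(x) for all x ∈ ℝ. Define the Airy kernel K(x,y) = ε·(A(x)·B'(y) − A'(x)·B(y))/(x − y) for x ≠ y. Then for all x ≠ y: ε·( ∂₁K(x,y) + ∂₂K(x,y) ) = −A(x)·B(y), where ∂₁ and ∂₂ denote the partial derivatives of K with respect to its first and second argument. -/
/-- The Airy kernel `K(x,y) = ε·(A(x)B'(y) − A'(x)B(y))/(x − y)` built from two solutions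
of the rescaled Airy equation `ε² f'' = x f`. -/
noncomputable def airyK (ε : ℝ) (A B : ℝ → ℝ) (x y : ℝ) : ℝ :=
  ε * (A x * deriv B y - deriv A x * B y) / (x - y)

/-- For the Airy kernel built from smooth solutions of `ε² f''(x) = x f(x)`, one has
`ε (∂₁K + ∂₂K)(x,y) = − A(x) B(y)` for all `x ≠ y`. -/
theorem stmt_4 (ε : ℝ) (hε : ε ≠ 0) (A B : ℝ → ℝ)
    (hA : ContDiff ℝ (⊤ : ℕ∞) A) (hB : ContDiff ℝ (⊤ : ℕ∞) B)
    (hAeq : ∀ x, ε ^ 2 * deriv (deriv A) x = x * A x)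
    (hBeq : ∀ x, ε ^ 2 * deriv (deriv B) x = x * B x) :
    ∀ x y : ℝ, x ≠ y →
      ε * (deriv (fun x' => airyK ε A B x' y) x + deriv (fun y' => airyK ε A B x y') y)
        = -(A x * B y) := by
  intro x y hxy
  have hsub : x - y ≠ 0 := sub_ne_zero.mpr hxy
  have hAd : Differentiable ℝ A := hA.differentiable (by norm_num)
  have hAd2 : Differentiable ℝ (deriv A) :=
    (contDiff_infty_iff_deriv.mp (hA.of_le (by simp))).2.differentiable (by norm_num)
  have hBd : Differentiable ℝ B := hB.differentiable (by norm_num)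
  have hBd2 : Differentiable ℝ (deriv B) :=
    (contDiff_infty_iff_deriv.mp (hB.of_le (by simp))).2.differentiable (by norm_num)
  -- first partial
  have hnum1 : HasDerivAt (fun x' => ε * (A x' * deriv B y - deriv A x' * B y))
      (ε * (deriv A x * deriv B y - deriv (deriv A) x * B y)) x := by
    exact (((hAd x).hasDerivAt.mul_const (deriv B y)).sub
      ((hAd2 x).hasDerivAt.mul_const (B y))).const_mul ε
  have hden1 : HasDerivAt (fun x' => x' - y) 1 x := by
    simpa using (hasDerivAt_id x).sub_const y
  have h1 : HasDerivAt (fun x' => airyK ε A B x' y)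
      ((ε * (deriv A x * deriv B y - deriv (deriv A) x * B y) * (x - y)
        - ε * (A x * deriv B y - deriv A x * B y) * 1) / (x - y) ^ 2) x := by
    exact hnum1.div hden1 hsub
  -- second partial
  have hnum2 : HasDerivAt (fun y' => ε * (A x * deriv B y' - deriv A x * B y'))
      (ε * (A x * deriv (deriv B) y - deriv A x * deriv B y)) y := by
    exact ((((hBd2 y).hasDerivAt.const_mul (A x))).sub
      (((hBd y).hasDerivAt.const_mul (deriv A x)))).const_mul ε
  have hden2 : HasDerivAt (fun y' => x - y') (-1) y := by
    simpa using ((hasDerivAt_id y).const_sub x)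
  have h2 : HasDerivAt (fun y' => airyK ε A B x y')
      ((ε * (A x * deriv (deriv B) y - deriv A x * deriv B y) * (x - y)
        - ε * (A x * deriv B y - deriv A x * B y) * (-1)) / (x - y) ^ 2) y := by
    exact hnum2.div hden2 hsub
  rw [h1.deriv, h2.deriv]
  have ha2 : deriv (deriv A) x = x * A x / ε ^ 2 := by
    field_simp
    linarith [hAeq x]
  have hb2 : deriv (deriv B) y = y * B y / ε ^ 2 := by
    field_simp
    linarith [hBeq y]
  rw [ha2, hb2]
  field_simp
  ring
end

section
/- Let ε be a nonzero real number and let A, B : ℝ → ℝ be infinitely differentiable functions satisfying the rescaled Airy equation ε²·f''(x) = x·f(x) for all x ∈ ℝ. Define the Airy kernel K(x,y) = ε·(A(x)·B'(y) − A'(x)·B(y))/(x − y) for x ≠ y. Then for all x ≠ y: ε²·∂₁²K(x,y) − x·K(x,y) = ε²·∂₂²K(x,y) − y·K(x,y), where ∂₁² and ∂₂² denote the second partial derivatives of K in the first and second arguments respectively (the paper's identity (ε² d²/dx² − x)ψ = (ε² d²/dx'² − x')ψ for the Airy Baker–Akhiezer kernel). -/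
lemma airyK_swap (ε : ℝ) (A B : ℝ → ℝ) (a b : ℝ) :
    airyK ε A B a b = airyK ε B A b a := by
  unfold airyK
  rw [show b - a = -(a - b) by ring, div_neg, ← neg_div]
  congr 1
  ring

lemma airy_second (ε : ℝ) (hε : ε ≠ 0) (A B : ℝ → ℝ)
    (hA : ContDiff ℝ (⊤ : ℕ∞) A)
    (hAeq : ∀ x, ε ^ 2 * deriv (deriv A) x = x * A x)
    (x y : ℝ) (hxy : x ≠ y) :
    ε ^ 2 * deriv (deriv fun t => airyK ε A B t y) x
      = x * airyK ε A B x y - ε * (A x * B y) / (x - y)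
        - 2 * ε ^ 2 * (ε * (deriv A x * deriv B y - x * A x / ε ^ 2 * B y)) / (x - y) ^ 2
        + 2 * ε ^ 2 * (ε * (A x * deriv B y - deriv A x * B y)) / (x - y) ^ 3 := by
  have hε2 : (ε ^ 2 : ℝ) ≠ 0 := pow_ne_zero 2 hε
  have hxy' : x - y ≠ 0 := sub_ne_zero.mpr hxy
  have hAinf : ContDiff ℝ ((⊤ : ℕ∞) : WithTop ℕ∞) A := hA.of_le (by simp)
  have hA' : Differentiable ℝ A := hAinf.differentiable (by simp)
  have hA1' : Differentiable ℝ (deriv A) :=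
    (contDiff_infty_iff_deriv.mp hAinf).2.differentiable (by simp)
  have hA2 : deriv (deriv A) = fun t => t * A t / ε ^ 2 := by
    funext t
    rw [eq_div_iff hε2, mul_comm, hAeq t]
  -- derivative of the numerator p(t) = ε (A t B'(y) - A' t B(y))
  have hp : ∀ t : ℝ, HasDerivAt (fun s => ε * (A s * deriv B y - deriv A s * B y))
      (ε * (deriv A t * deriv B y - t * A t / ε ^ 2 * B y)) t := by
    intro t
    have h2 := (((hA' t).hasDerivAt.mul_const (deriv B y)).sub
      ((hA1' t).hasDerivAt.mul_const (B y))).const_mul ε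
    simp only [hA2] at h2
    exact h2
  -- derivative of p₁(t) = ε (A' t B'(y) - (t A t / ε²) B(y))
  have hp1 : ∀ t : ℝ, HasDerivAt (fun s => ε * (deriv A s * deriv B y - s * A s / ε ^ 2 * B y))
      (ε * (t * A t / ε ^ 2 * deriv B y - (A t + t * deriv A t) / ε ^ 2 * B y)) t := by
    intro t
    have h1 : HasDerivAt (fun s : ℝ => s * A s / ε ^ 2 * B y)
        ((1 * A t + t * deriv A t) / ε ^ 2 * B y) t :=
      (((hasDerivAt_id t).mul (hA' t).hasDerivAt).div_const _).mul_const (B y)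
    have h2 := (((hA1' t).hasDerivAt.mul_const (deriv B y)).sub h1).const_mul ε
    simp only [hA2] at h2
    exact h2.congr_deriv (by ring)
  have hinv : ∀ t : ℝ, t ≠ y → HasDerivAt (fun s => (s - y)⁻¹) (-(((t - y) ^ 2)⁻¹)) t := by
    intro t ht
    have h := ((hasDerivAt_id t).sub_const y).inv (sub_ne_zero.mpr ht)
    simp only [id_eq] at h
    exact h.congr_deriv (by rw [neg_div, one_div])
  have hF : ∀ t : ℝ, t ≠ y → HasDerivAt (fun s => airyK ε A B s y)
      (ε * (deriv A t * deriv B y - t * A t / ε ^ 2 * B y) * (t - y)⁻¹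
        - ε * (A t * deriv B y - deriv A t * B y) * ((t - y) ^ 2)⁻¹) t := by
    intro t ht
    have h := (hp t).mul (hinv t ht)
    simp only [airyK, div_eq_mul_inv]
    exact h.congr_deriv (by ring)
  have hev : (deriv fun s => airyK ε A B s y) =ᶠ[nhds x]
      (fun t => ε * (deriv A t * deriv B y - t * A t / ε ^ 2 * B y) * (t - y)⁻¹
        - ε * (A t * deriv B y - deriv A t * B y) * ((t - y) ^ 2)⁻¹) := by
    filter_upwards [(isOpen_compl_singleton (x := y)).mem_nhds (by simpa using hxy)] with t ht
    exact (hF t (Set.mem_compl_singleton_iff.mp ht)).deriv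
  have hinv2 : HasDerivAt (fun s : ℝ => ((s - y) ^ 2)⁻¹)
      (-(2 * (x - y)) / ((x - y) ^ 2) ^ 2) x := by
    have h := (((hasDerivAt_id x).sub_const y).pow 2).inv (pow_ne_zero 2 hxy')
    simp only [id_eq] at h
    norm_num at h
    exact h
  have hGd := ((hp1 x).mul (hinv x hxy)).sub ((hp x).mul hinv2)
  rw [hev.deriv_eq, (show HasDerivAt (fun t => ε * (deriv A t * deriv B y - t * A t / ε ^ 2 * B y) * (t - y)⁻¹
      - ε * (A t * deriv B y - deriv A t * B y) * ((t - y) ^ 2)⁻¹) _ x from hGd).deriv, airyK]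
  field_simp
  ring

/-- For the Airy kernel built from smooth solutions of `ε² f''(x) = x f(x)`, one has
`(ε² ∂₁² − x)K(x,y) = (ε² ∂₂² − y)K(x,y)` for all `x ≠ y`. -/
theorem stmt_5 (ε : ℝ) (hε : ε ≠ 0) (A B : ℝ → ℝ)
    (hA : ContDiff ℝ (⊤ : ℕ∞) A) (hB : ContDiff ℝ (⊤ : ℕ∞) B)
    (hAeq : ∀ x, ε ^ 2 * deriv (deriv A) x = x * A x)
    (hBeq : ∀ x, ε ^ 2 * deriv (deriv B) x = x * B x) :
    ∀ x y : ℝ, x ≠ y →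
      ε ^ 2 * deriv (deriv fun x' => airyK ε A B x' y) x - x * airyK ε A B x y
        = ε ^ 2 * deriv (deriv fun y' => airyK ε A B x y') y - y * airyK ε A B x y := by
  intro x y hxy
  have hxy' : x - y ≠ 0 := sub_ne_zero.mpr hxy
  have hyx' : y - x ≠ 0 := sub_ne_zero.mpr (Ne.symm hxy)
  have h1 := airy_second ε hε A B hA hAeq x y hxy
  have h2 := airy_second ε hε B A hB hBeq y x (Ne.symm hxy)
  have hside2 : (fun y' => airyK ε A B x y') = fun y' => airyK ε B A y' x :=
    funext fun t => airyK_swap ε A B x t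
  rw [hside2, h1, h2, airyK_swap ε A B x y]
  simp only [airyK]
  field_simp
  ring
end

section
/- Let ε be a nonzero real number and let A, B : ℝ → ℝ be infinitely differentiable functions satisfying the rescaled Airy equation ε²·f''(x) = x·f(x) for all x ∈ ℝ. Define the Airy kernel K(x,y) = ε·(A(x)·B'(y) − A'(x)·B(y))/(x − y) for x ≠ y. Then for all x ≠ y the kernel satisfies the second-order quantum-curve equation: (x − y)·( ε²·∂₁²K(x,y) − x·K(x,y) ) = ε²·( ∂₂K(x,y) − ∂₁K(x,y) ), where ∂₁, ∂₂ (resp. ∂₁²) denote first (resp. second) partial derivatives in the indicated argument. -/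
/-- The second-order quantum-curve equation for the Airy kernel:
`(x − y)·(ε² ∂₁²K − x K) = ε²·(∂₂K − ∂₁K)` for all `x ≠ y`. -/
theorem stmt_6 (ε : ℝ) (hε : ε ≠ 0) (A B : ℝ → ℝ)
    (hA : ContDiff ℝ (⊤ : ℕ∞) A) (hB : ContDiff ℝ (⊤ : ℕ∞) B)
    (hAeq : ∀ x, ε ^ 2 * deriv (deriv A) x = x * A x)
    (hBeq : ∀ x, ε ^ 2 * deriv (deriv B) x = x * B x) :
    ∀ x y : ℝ, x ≠ y →
      (x - y) * (ε ^ 2 * deriv (deriv fun x' => airyK ε A B x' y) x - x * airyK ε A B x y)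
        = ε ^ 2 * (deriv (fun y' => airyK ε A B x y') y
            - deriv (fun x' => airyK ε A B x' y) x) := by
  intro x y hxy
  have hε2 : (ε : ℝ) ^ 2 ≠ 0 := pow_ne_zero 2 hε
  have hsub : x - y ≠ 0 := sub_ne_zero.mpr hxy
  have hA1 : Differentiable ℝ A := hA.differentiable (by simp)
  have hA2 : Differentiable ℝ (deriv A) :=
    ((contDiff_infty_iff_deriv.mp (hA.of_le (by simp))).2).differentiable (by simp)
  have hB1 : Differentiable ℝ B := hB.differentiable (by simp)
  have hB2 : Differentiable ℝ (deriv B) :=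
    ((contDiff_infty_iff_deriv.mp (hB.of_le (by simp))).2).differentiable (by simp)
  have hdA2 : ∀ t, deriv (deriv A) t = t * A t / ε ^ 2 := by
    intro t
    rw [eq_div_iff hε2]
    linear_combination hAeq t
  have hdB2 : ∀ t, deriv (deriv B) t = t * B t / ε ^ 2 := by
    intro t
    rw [eq_div_iff hε2]
    linear_combination hBeq t
  have hdA' : ∀ t, HasDerivAt (deriv A) (t * A t / ε ^ 2) t := by
    intro t
    have h := (hA2 t).hasDerivAt
    rwa [hdA2 t] at h
  have hdB' : ∀ t, HasDerivAt (deriv B) (t * B t / ε ^ 2) t := by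
    intro t
    have h := (hB2 t).hasDerivAt
    rwa [hdB2 t] at h
  -- first partial derivative in x, at every t ≠ y
  have hK1 : ∀ t : ℝ, t ≠ y → HasDerivAt (fun s => airyK ε A B s y)
      ((ε * (deriv A t * deriv B y - t * A t / ε ^ 2 * B y) * (t - y)
        - ε * (A t * deriv B y - deriv A t * B y) * 1) / (t - y) ^ 2) t := by
    intro t ht
    have hnum : HasDerivAt (fun s => ε * (A s * deriv B y - deriv A s * B y))
        (ε * (deriv A t * deriv B y - t * A t / ε ^ 2 * B y)) t :=
      (((hA1 t).hasDerivAt.mul_const _).sub ((hdA' t).mul_const _)).const_mul ε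
    have hden : HasDerivAt (fun s : ℝ => s - y) 1 t := (hasDerivAt_id t).sub_const y
    have := hnum.div hden (sub_ne_zero.mpr ht)
    simpa [airyK, Pi.div_def] using this
  -- the explicit first-derivative function
  set D : ℝ → ℝ := fun t =>
      (ε * (deriv A t * deriv B y - t * A t / ε ^ 2 * B y) * (t - y)
        - ε * (A t * deriv B y - deriv A t * B y) * 1) / (t - y) ^ 2 with hD
  have hev : deriv (fun s => airyK ε A B s y) =ᶠ[nhds x] D := by
    filter_upwards [isOpen_compl_singleton.mem_nhds hxy] with t ht
    exact (hK1 t ht).deriv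
  -- second derivative of D at x
  have hnum' : HasDerivAt
      (fun t => ε * (deriv A t * deriv B y - t * A t / ε ^ 2 * B y) * (t - y)
        - ε * (A t * deriv B y - deriv A t * B y) * 1)
      ((ε * (x * A x / ε ^ 2 * deriv B y
          - (1 * A x + x * deriv A x) / ε ^ 2 * B y) * (x - y)
        + ε * (deriv A x * deriv B y - x * A x / ε ^ 2 * B y) * 1)
        - ε * (deriv A x * deriv B y - x * A x / ε ^ 2 * B y) * 1) x := by
    have h1 : HasDerivAt (fun t => ε * (deriv A t * deriv B y - t * A t / ε ^ 2 * B y))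
        (ε * (x * A x / ε ^ 2 * deriv B y - (1 * A x + x * deriv A x) / ε ^ 2 * B y)) x := by
      have ha : HasDerivAt (fun t : ℝ => t * A t / ε ^ 2)
          ((1 * A x + x * deriv A x) / ε ^ 2) x :=
        ((hasDerivAt_id x).mul (hA1 x).hasDerivAt).div_const _
      exact (((hdA' x).mul_const _).sub (ha.mul_const _)).const_mul ε
    have h2 : HasDerivAt (fun t : ℝ => t - y) 1 x := (hasDerivAt_id x).sub_const y
    have h3 : HasDerivAt (fun t => ε * (A t * deriv B y - deriv A t * B y))
        (ε * (deriv A x * deriv B y - x * A x / ε ^ 2 * B y)) x :=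
      (((hA1 x).hasDerivAt.mul_const _).sub ((hdA' x).mul_const _)).const_mul ε
    simpa [Pi.mul_def, Pi.sub_def] using (h1.mul h2).sub (h3.mul_const 1)
  have hden' : HasDerivAt (fun t : ℝ => (t - y) ^ 2) (2 * (x - y) ^ 1 * 1) x :=
    ((hasDerivAt_id x).sub_const y).pow 2
  have hDx : HasDerivAt D
      ((((ε * (x * A x / ε ^ 2 * deriv B y
          - (1 * A x + x * deriv A x) / ε ^ 2 * B y) * (x - y)
        + ε * (deriv A x * deriv B y - x * A x / ε ^ 2 * B y) * 1)
        - ε * (deriv A x * deriv B y - x * A x / ε ^ 2 * B y) * 1) * (x - y) ^ 2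
        - (ε * (deriv A x * deriv B y - x * A x / ε ^ 2 * B y) * (x - y)
          - ε * (A x * deriv B y - deriv A x * B y) * 1) * (2 * (x - y) ^ 1 * 1))
        / ((x - y) ^ 2) ^ 2) x :=
    hnum'.div hden' (pow_ne_zero 2 hsub)
  -- derivative in y at y
  have hK2 : HasDerivAt (fun y' => airyK ε A B x y')
      ((ε * (A x * (y * B y / ε ^ 2) - deriv A x * deriv B y) * (x - y)
        - ε * (A x * deriv B y - deriv A x * B y) * (-1)) / (x - y) ^ 2) y := by
    have hnum : HasDerivAt (fun y' => ε * (A x * deriv B y' - deriv A x * B y'))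
        (ε * (A x * (y * B y / ε ^ 2) - deriv A x * deriv B y)) y :=
      (((hdB' y).const_mul (A x)).sub ((hB1 y).hasDerivAt.const_mul (deriv A x))).const_mul ε
    have hden : HasDerivAt (fun y' : ℝ => x - y') (-1) y := (hasDerivAt_id y).const_sub x
    have := hnum.div hden hsub
    simpa [airyK, Pi.div_def] using this
  rw [hev.deriv_eq, hDx.deriv, hK2.deriv, (hK1 x hxy).deriv, airyK]
  field_simp
  ring
end
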